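/- For every complex number x and every natural number n, the function u ↦ exp( −3·2^{−1/3}·u² + 2^{1/3}·x·u )·u^n is Lebesgue integrable on ℝ and ∫_{−∞}^{∞} exp( −3·2^{−1/3}·u² + 2^{1/3}·x·u )·u^n du = 2^{1/6}·√(π/3)·exp(x²/6)·c_n(x), where c_n(x) := ∑_{k=0}^{⌊n/2⌋} x^{n−2k} · 3^{k−n} · 2^{−n/3−k} · n! / ( k!·(n−2k)! ). -/

import Mathlib

open Real MeasureTheory

/-- The coefficients `c_n(x) = ∑_{k=0}^{⌊n/2⌋} x^{n−2k} 3^{k−n} 2^{−n/3−k} n!/(k!(n−2k)!)`. -/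
noncomputable def c (x : ℂ) (n : ℕ) : ℂ :=
  ∑ k ∈ Finset.range (n / 2 + 1),
    x ^ (n - 2 * k) *
      ((((3 : ℝ) ^ ((k : ℤ) - (n : ℤ)) * (2 : ℝ) ^ (-(n : ℝ) / 3 - (k : ℝ)) *
          (n.factorial : ℝ) / ((k.factorial : ℝ) * ((n - 2 * k).factorial : ℝ))) : ℝ) : ℂ)

/-!
Write `I_n = ∫ exp(b u² + c u) uⁿ du` with `Re b < 0`. The derivative of `exp(b u² + c u) uⁿ`
is `2b·(…)u^{n+1} + c·(…)uⁿ + n·(…)u^{n-1}`, and it integrates to zero over `ℝ`, so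
`2b I_{n+1} + c I_n + n I_{n-1} = 0`. This is the three-term recurrence of the two-variable
Hermite polynomials `H_n(y, z) = ∑ n!/(k!(n-2k)!) y^{n-2k} z^k` at `y = -c/(2b)`, `z = -1/(4b)`,
so `I_n = I_0 · H_n(-c/(2b), -1/(4b))` with the Gaussian integral
`I_0 = √(π/(-b)) exp(-c²/(4b))`. For `b = -3·2^{-1/3}` and `c = 2^{1/3}x` one has
`I_0 = 2^{1/6} √(π/3) exp(x²/6)` and `c_n(x) = H_n(2^{2/3}x/6, 2^{1/3}/12)`.
-/

open Finset Nat

noncomputable def twoVarHermiteTerm (y z : ℂ) (n k : ℕ) : ℂ :=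
  if 2 * k ≤ n then (n ! / (k ! * (n - 2 * k)!) : ℂ) * y ^ (n - 2 * k) * z ^ k else 0

/-- The two-variable (Kampé de Fériet) Hermite polynomial `H_n(y, z)`, whose exponential
generating function is `exp (y t + z t²)`. -/
noncomputable def twoVarHermite (y z : ℂ) (n : ℕ) : ℂ :=
  ∑ k ∈ range (n / 2 + 1), twoVarHermiteTerm y z n k

section TwoVarHermite

variable (y z : ℂ)

lemma twoVarHermiteTerm_succ_zero (n : ℕ) :
    twoVarHermiteTerm y z (n + 1) 0 = y * twoVarHermiteTerm y z n 0 := by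
  have : (n ! : ℂ) ≠ 0 := by exact_mod_cast n.factorial_ne_zero
  simp only [twoVarHermiteTerm, mul_zero, Nat.zero_le, if_true, Nat.sub_zero, factorial_zero,
    pow_succ, pow_zero]
  push_cast [factorial_succ]
  field_simp

lemma twoVarHermiteTerm_add_two_succ (n k : ℕ) :
    twoVarHermiteTerm y z (n + 2) (k + 1) =
      y * twoVarHermiteTerm y z (n + 1) (k + 1) + 2 * (n + 1) * z * twoVarHermiteTerm y z n k := by
  have hkfact : (k ! : ℂ) ≠ 0 := by exact_mod_cast k.factorial_ne_zero
  rcases le_or_gt (2 * k) n with hk | hk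
  · obtain ⟨j, rfl⟩ := Nat.exists_eq_add_of_le hk
    have hjfact : (j ! : ℂ) ≠ 0 := by exact_mod_cast j.factorial_ne_zero
    simp only [twoVarHermiteTerm, if_pos hk, show 2 * (k + 1) ≤ 2 * k + j + 2 by omega,
      if_true, show 2 * k + j + 2 - 2 * (k + 1) = j by omega, Nat.add_sub_cancel_left]
    rcases j with _ | j
    · simp only [show ¬ (2 * (k + 1) ≤ 2 * k + 0 + 1) by omega, if_false, add_zero, mul_zero,
        zero_add, factorial_zero, pow_zero]
      push_cast [factorial_succ]
      field_simp
      ring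
    · simp only [show 2 * (k + 1) ≤ 2 * k + (j + 1) + 1 by omega, if_true,
        show 2 * k + (j + 1) + 1 - 2 * (k + 1) = j by omega]
      rw [show 2 * k + (j + 1) = 2 * k + j + 1 by ring]
      push_cast [factorial_succ]
      field_simp
      ring
  · simp [twoVarHermiteTerm, show ¬ 2 * (k + 1) ≤ n + 2 by omega,
      show ¬ 2 * (k + 1) ≤ n + 1 by omega, show ¬ 2 * k ≤ n by omega]

lemma twoVarHermite_eq_sum_range {n N : ℕ} (hN : n / 2 < N) :
    twoVarHermite y z n = ∑ k ∈ range N, twoVarHermiteTerm y z n k := by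
  refine sum_subset (range_subset_range.mpr (by omega)) fun k _ hk => ?_
  simp only [mem_range] at hk
  simp [twoVarHermiteTerm, show ¬ 2 * k ≤ n by omega]

@[simp]
lemma twoVarHermite_zero : twoVarHermite y z 0 = 1 := by
  simp [twoVarHermite, twoVarHermiteTerm]

-- At `n = 0` the truncated `n - 1` does no harm: its coefficient `2 * n * z` vanishes.
lemma twoVarHermite_succ (n : ℕ) :
    twoVarHermite y z (n + 1) =
      y * twoVarHermite y z n + 2 * n * z * twoVarHermite y z (n - 1) := by
  rcases n with _ | n
  · simp [twoVarHermite, twoVarHermiteTerm]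
  rw [twoVarHermite_eq_sum_range y z (N := n + 3) (by omega),
    twoVarHermite_eq_sum_range y z (n := n + 1) (N := n + 3) (by omega),
    Nat.add_sub_cancel, twoVarHermite_eq_sum_range y z (N := n + 2) (by omega),
    sum_range_succ', sum_range_succ' _ (n + 2), mul_add, mul_sum, mul_sum]
  simp only [twoVarHermiteTerm_add_two_succ, twoVarHermiteTerm_succ_zero, sum_add_distrib]
  push_cast
  ring

end TwoVarHermite

lemma abs_pow_le_factorial_mul_exp_add_exp (n : ℕ) (u : ℝ) :
    |u| ^ n ≤ n ! * (Real.exp u + Real.exp (-u)) := by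
  have h := Real.pow_div_factorial_le_exp _ (abs_nonneg u) n
  rw [div_le_iff₀' (by positivity)] at h
  exact h.trans (mul_le_mul_of_nonneg_left (Real.exp_abs_le u) (by positivity))

open Complex

noncomputable def gaussianMonomial (b c : ℂ) (n : ℕ) (u : ℝ) : ℂ :=
  cexp (b * u ^ 2 + c * u) * u ^ n

lemma hasDerivAt_gaussianMonomial (b c : ℂ) (n : ℕ) (u : ℝ) :
    HasDerivAt (gaussianMonomial b c n) (2 * b * gaussianMonomial b c (n + 1) u +
      c * gaussianMonomial b c n u + n * gaussianMonomial b c (n - 1) u) u := by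
  have hquad : HasDerivAt (fun z : ℂ => b * z ^ 2 + c * z) (2 * b * u + c) u := by
    refine (((hasDerivAt_pow 2 _).const_mul b).add ((hasDerivAt_id _).const_mul c)).congr_deriv ?_
    push_cast
    ring
  refine (hquad.cexp.mul (hasDerivAt_pow n (u : ℂ))).comp_ofReal.congr_deriv ?_
  rcases n with _ | n <;> simp only [gaussianMonomial, Nat.add_sub_cancel] <;> push_cast <;> ring

section GaussianMonomial

variable {b : ℂ} (c : ℂ)

lemma norm_gaussianMonomial_le (n : ℕ) (u : ℝ) :
    ‖gaussianMonomial b c n u‖ ≤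
      n ! * (‖gaussianMonomial b (c + 1) 0 u‖ + ‖gaussianMonomial b (c - 1) 0 u‖) := by
  have hshift (d : ℝ) : ‖gaussianMonomial b (c + d) 0 u‖ =
      ‖cexp (b * u ^ 2 + c * u)‖ * Real.exp (d * u) := by
    rw [gaussianMonomial, pow_zero, mul_one, ← Complex.norm_exp_ofReal, ← norm_mul,
      ← Complex.exp_add]
    push_cast
    ring_nf
  rw [show c - 1 = c + ((-1 : ℝ) : ℂ) by push_cast; ring, show c + 1 = c + ((1 : ℝ) : ℂ) by simp,
    hshift, hshift, gaussianMonomial, norm_mul, norm_pow, Complex.norm_real, Real.norm_eq_abs]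
  simp only [one_mul, neg_one_mul]
  calc ‖cexp (b * u ^ 2 + c * u)‖ * |u| ^ n
      ≤ ‖cexp (b * u ^ 2 + c * u)‖ * (n ! * (Real.exp u + Real.exp (-u))) :=
        mul_le_mul_of_nonneg_left (abs_pow_le_factorial_mul_exp_add_exp n u) (norm_nonneg _)
    _ = _ := by ring

variable (hb : b.re < 0)
include hb

lemma integrable_gaussianMonomial (n : ℕ) : Integrable (gaussianMonomial b c n) := by
  have hexp (d : ℂ) : Integrable (gaussianMonomial b d 0) := by
    refine (integrable_cexp_quadratic' hb d 0).congr (.of_forall fun u => ?_)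
    simp [gaussianMonomial]
  refine Integrable.mono' (((hexp _).norm.add (hexp _).norm).const_mul (n ! : ℝ)) ?_
    (.of_forall (norm_gaussianMonomial_le c n))
  unfold gaussianMonomial
  fun_prop

lemma integral_gaussianMonomial_recurrence (n : ℕ) :
    2 * b * (∫ u, gaussianMonomial b c (n + 1) u) + c * (∫ u, gaussianMonomial b c n u) +
      n * (∫ u, gaussianMonomial b c (n - 1) u) = 0 := by
  have hint (m : ℕ) (a : ℂ) : Integrable fun u => a * gaussianMonomial b c m u :=
    (integrable_gaussianMonomial c hb m).const_mul a
  have hint₂ : Integrable fun u =>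
      2 * b * gaussianMonomial b c (n + 1) u + c * gaussianMonomial b c n u :=
    (hint _ _).add (hint _ _)
  have h := integral_eq_zero_of_hasDerivAt_of_integrable (hasDerivAt_gaussianMonomial b c n)
    (hint₂.add (hint _ _)) (integrable_gaussianMonomial c hb n)
  rwa [integral_add hint₂ (hint _ _), integral_add (hint _ _) (hint _ _),
    integral_const_mul, integral_const_mul, integral_const_mul] at h

theorem integral_gaussianMonomial (n : ℕ) :
    ∫ u, gaussianMonomial b c n u = (π / -b) ^ (1 / 2 : ℂ) * cexp (-c ^ 2 / (4 * b)) *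
      twoVarHermite (-c / (2 * b)) (-1 / (4 * b)) n := by
  have hb0 : b ≠ 0 := by rintro rfl; simp at hb
  induction n using Nat.strong_induction_on with
  | _ n ih =>
    rcases n with _ | n
    · simpa [gaussianMonomial, neg_div] using integral_cexp_quadratic hb c 0
    · have hrec := integral_gaussianMonomial_recurrence c hb n
      rw [ih n n.lt_succ_self, ih (n - 1) (by omega)] at hrec
      have hy : 2 * b * (-c / (2 * b)) = -c := by field_simp
      have hz : 4 * b * (-1 / (4 * b)) = -1 := by field_simp
      rw [twoVarHermite_succ]
      refine mul_left_cancel₀ (mul_ne_zero two_ne_zero hb0) ?_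
      linear_combination hrec - (π / -b) ^ (1 / 2 : ℂ) * cexp (-c ^ 2 / (4 * b)) *
        (twoVarHermite (-c / (2 * b)) (-1 / (4 * b)) n * hy +
          n * twoVarHermite (-c / (2 * b)) (-1 / (4 * b)) (n - 1) * hz)

end GaussianMonomial

lemma two_rpow_one_third_pow_three : ((2 : ℝ) ^ ((1 : ℝ) / 3)) ^ 3 = 2 := by
  rw [← Real.rpow_mul_natCast zero_le_two]; norm_num

lemma two_rpow_div_three (r : ℝ) : (2 : ℝ) ^ (r / 3) = ((2 : ℝ) ^ ((1 : ℝ) / 3)) ^ r := by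
  rw [← Real.rpow_mul zero_le_two]; ring_nf

lemma two_rpow_neg_one_third : (2 : ℝ) ^ (-(1 : ℝ) / 3) = ((2 : ℝ) ^ ((1 : ℝ) / 3))⁻¹ := by
  rw [two_rpow_div_three, Real.rpow_neg_one]

lemma three_zpow_mul_two_rpow (j k : ℕ) :
    (3 : ℝ) ^ ((k : ℤ) - ((2 * k + j : ℕ) : ℤ)) * (2 : ℝ) ^ (-((2 * k + j : ℕ) : ℝ) / 3 - k) =
      (((2 : ℝ) ^ ((1 : ℝ) / 3)) ^ 2 / 6) ^ j * ((2 : ℝ) ^ ((1 : ℝ) / 3) / 12) ^ k := by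
  set s := (2 : ℝ) ^ ((1 : ℝ) / 3)
  have hs : 0 < s := by positivity
  rw [show (k : ℤ) - ((2 * k + j : ℕ) : ℤ) = -((k + j : ℕ) : ℤ) by push_cast; ring, zpow_neg,
    zpow_natCast,
    show -((2 * k + j : ℕ) : ℝ) / 3 - k = -((5 * k + j : ℕ) : ℝ) / 3 by push_cast; ring,
    two_rpow_div_three, Real.rpow_neg hs.le, Real.rpow_natCast,
    show (6 : ℝ) = 3 * s ^ 3 by rw [two_rpow_one_third_pow_three]; norm_num,
    show (12 : ℝ) = 3 * s ^ 3 * s ^ 3 by rw [two_rpow_one_third_pow_three]; norm_num,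
    show s ^ 2 / (3 * s ^ 3) = (3 * s)⁻¹ by field_simp,
    show s / (3 * s ^ 3 * s ^ 3) = (3 * s ^ 5)⁻¹ by field_simp, inv_pow, inv_pow, ← mul_inv,
    ← mul_inv]
  ring

lemma c_eq_twoVarHermite (x : ℂ) (n : ℕ) :
    c x n = twoVarHermite ((((2 : ℝ) ^ ((1 : ℝ) / 3) : ℝ) : ℂ) ^ 2 * x / 6)
      ((((2 : ℝ) ^ ((1 : ℝ) / 3) : ℝ) : ℂ) / 12) n := by
  refine sum_congr rfl fun k hk => ?_
  obtain ⟨j, rfl⟩ : ∃ j, n = 2 * k + j := Nat.exists_eq_add_of_le (by simp at hk; omega)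
  rw [twoVarHermiteTerm, if_pos (by omega), Nat.add_sub_cancel_left, three_zpow_mul_two_rpow]
  push_cast
  ring

lemma cpow_half_pi_div_three_mul_two_rpow_neg_one_third :
    ((π : ℂ) / -(-3 * (((2 : ℝ) ^ (-(1 : ℝ) / 3) : ℝ) : ℂ))) ^ (1 / 2 : ℂ) =
      (((2 : ℝ) ^ ((1 : ℝ) / 6) : ℝ) : ℂ) * ((√(π / 3) : ℝ) : ℂ) := by
  set s := (2 : ℝ) ^ ((1 : ℝ) / 3)
  have hs : 0 < s := by positivity
  rw [two_rpow_neg_one_third,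
    show (π : ℂ) / -(-3 * ((s⁻¹ : ℝ) : ℂ)) = ((s * (π / 3) : ℝ) : ℂ) by push_cast; field_simp,
    show (1 / 2 : ℂ) = ((1 / 2 : ℝ) : ℂ) by norm_num, ← Complex.ofReal_cpow (by positivity),
    Real.mul_rpow hs.le (by positivity), ← Real.sqrt_eq_rpow (π / 3), ← Real.rpow_mul zero_le_two]
  norm_num

/-- The Gaussian moment integrals: `u ↦ exp(−3·2^{−1/3}u² + 2^{1/3}xu)·uⁿ` is
integrable on `ℝ` with integral `2^{1/6}·√(π/3)·exp(x²/6)·c_n(x)`. -/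
theorem pearcey_gaussian_moments (x : ℂ) (n : ℕ) :
    Integrable (fun u : ℝ =>
      Complex.exp (-3 * (((2 : ℝ) ^ (-(1 : ℝ) / 3) : ℝ) : ℂ) * (u : ℂ) ^ 2 +
        (((2 : ℝ) ^ ((1 : ℝ) / 3) : ℝ) : ℂ) * x * (u : ℂ)) * (u : ℂ) ^ n) ∧
    (∫ u : ℝ,
        Complex.exp (-3 * (((2 : ℝ) ^ (-(1 : ℝ) / 3) : ℝ) : ℂ) * (u : ℂ) ^ 2 +
          (((2 : ℝ) ^ ((1 : ℝ) / 3) : ℝ) : ℂ) * x * (u : ℂ)) * (u : ℂ) ^ n) =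
      (((2 : ℝ) ^ ((1 : ℝ) / 6) : ℝ) : ℂ) * ((Real.sqrt (π / 3) : ℝ) : ℂ) *
        Complex.exp (x ^ 2 / 6) * c x n := by
  have hb : (-3 * (((2 : ℝ) ^ (-(1 : ℝ) / 3) : ℝ) : ℂ)).re < 0 := by
    rw [← Complex.ofReal_ofNat, ← Complex.ofReal_neg, ← Complex.ofReal_mul, Complex.ofReal_re]
    have : (0 : ℝ) < 2 ^ (-(1 : ℝ) / 3) := by positivity
    linarith
  have hs : (((2 : ℝ) ^ ((1 : ℝ) / 3) : ℝ) : ℂ) ≠ 0 := by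
    exact_mod_cast (by positivity : (0 : ℝ) < _).ne'
  have hs3 : (((2 : ℝ) ^ ((1 : ℝ) / 3) : ℝ) : ℂ) ^ 3 = 2 := by
    exact_mod_cast two_rpow_one_third_pow_three
  refine ⟨integrable_gaussianMonomial _ hb n, (integral_gaussianMonomial _ hb n).trans ?_⟩
  rw [c_eq_twoVarHermite, cpow_half_pi_div_three_mul_two_rpow_neg_one_third, two_rpow_neg_one_third]
  push_cast
  congr 1
  · congr 2
    field_simp
    linear_combination 6 * x ^ 2 * hs3
  · congr 1 <;> field_simp <;> ring
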